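/- arXiv:1903.11035 — 9 statements merged into one kernel-verified Lean document; each statement's English description precedes it below -/
import Mathlib

section
/- In the polynomial ring $R = K[X,Y]$ over a field $K$, let $J = (X^3, XY, Y^4)$ and $I = (XY, X^3 + Y^4)$. Then $IJ = J^2$ but $I^2 \neq J^2$. -/
/-!
Write `a = XY` and `b = X³ + Y⁴`, so `I = (a, b)`. Since `Y⁴ = b - X³`, we have `J = I + (X³)`,
hence `J² = IJ + (X⁶)`; and `X⁶ = b X³ - a (X²Y³)` with `X²Y³ ∈ J`, so `X⁶ ∈ IJ` and `IJ = J²`.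

On the other hand `X⁴Y = X³ · XY ∈ J²`, while every element of `I² = (a², ab, b²)` has the same
coefficient at `X⁴Y` and at `XY⁵`: neither monomial is divisible by a monomial of `a²` or `b²`,
and `p · ab = p · (X⁴Y + XY⁵)` has both coefficients equal to the constant term of `p`.
-/

open MvPolynomial

theorem Ideal.mul_sup_eq_sup_sq_of_sq_le {R : Type*} [CommSemiring R] {I K : Ideal R}
    (h : K ^ 2 ≤ I * (I ⊔ K)) : I * (I ⊔ K) = (I ⊔ K) ^ 2 := by
  refine le_antisymm (pow_two (I ⊔ K) ▸ Ideal.mul_mono_left le_sup_left) ?_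
  rw [pow_two, Ideal.sup_mul, Ideal.mul_sup K, mul_comm K I, ← pow_two]
  exact sup_le le_rfl (sup_le (Ideal.mul_mono_right le_sup_right) h)

section

variable (R : Type*) [CommRing R]

noncomputable def idealI : Ideal (MvPolynomial (Fin 2) R) :=
  Ideal.span {X 0 * X 1, X 0 ^ 3 + X 1 ^ 4}

noncomputable def idealJ : Ideal (MvPolynomial (Fin 2) R) :=
  Ideal.span {X 0 ^ 3, X 0 * X 1, X 1 ^ 4}

variable {R}

theorem idealJ_eq_idealI_sup : idealJ R = idealI R ⊔ Ideal.span {X 0 ^ 3} := by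
  rw [idealJ, idealI, ← Ideal.span_union]
  apply le_antisymm <;> rw [Ideal.span_le] <;> intro f hf <;>
    simp only [Set.mem_union, Set.mem_insert_iff, Set.mem_singleton_iff] at hf
  · rcases hf with rfl | rfl | rfl
    · exact Ideal.subset_span (by simp)
    · exact Ideal.subset_span (by simp)
    · rw [show (X 1 ^ 4 : MvPolynomial (Fin 2) R) = (X 0 ^ 3 + X 1 ^ 4) - X 0 ^ 3 by ring]
      exact sub_mem (Ideal.subset_span (by simp)) (Ideal.subset_span (by simp))
  · rcases hf with (rfl | rfl) | rfl
    · exact Ideal.subset_span (by simp)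
    · exact add_mem (Ideal.subset_span (by simp)) (Ideal.subset_span (by simp))
    · exact Ideal.subset_span (by simp)

theorem X_zero_pow_six_mem_idealI_mul_idealJ :
    (X 0 ^ 6 : MvPolynomial (Fin 2) R) ∈ idealI R * idealJ R := by
  have hxy : (X 0 * X 1 : MvPolynomial (Fin 2) R) ∈ idealI R := Ideal.subset_span (by simp)
  have hb : (X 0 ^ 3 + X 1 ^ 4 : MvPolynomial (Fin 2) R) ∈ idealI R := Ideal.subset_span (by simp)
  have hx3 : (X 0 ^ 3 : MvPolynomial (Fin 2) R) ∈ idealJ R := Ideal.subset_span (by simp)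
  have hx2y3 : (X 0 ^ 2 * X 1 ^ 3 : MvPolynomial (Fin 2) R) ∈ idealJ R := by
    rw [show (X 0 ^ 2 * X 1 ^ 3 : MvPolynomial (Fin 2) R) = X 0 * X 1 ^ 2 * (X 0 * X 1) by ring]
    exact Ideal.mul_mem_left _ _ (Ideal.subset_span (by simp))
  rw [show (X 0 ^ 6 : MvPolynomial (Fin 2) R) =
    (X 0 ^ 3 + X 1 ^ 4) * X 0 ^ 3 - X 0 * X 1 * (X 0 ^ 2 * X 1 ^ 3) by ring]
  exact sub_mem (Ideal.mul_mem_mul hb hx3) (Ideal.mul_mem_mul hxy hx2y3)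

theorem idealI_mul_idealJ : idealI R * idealJ R = idealJ R ^ 2 := by
  have h := X_zero_pow_six_mem_idealI_mul_idealJ (R := R)
  rw [idealJ_eq_idealI_sup] at h ⊢
  refine Ideal.mul_sup_eq_sup_sq_of_sq_le ?_
  rwa [Ideal.span_singleton_pow, Ideal.span_singleton_le_iff_mem, ← pow_mul]

theorem X_pow_mul_X_pow_eq_monomial (i j : ℕ) :
    (X 0 ^ i * X 1 ^ j : MvPolynomial (Fin 2) R) = monomial (.single 0 i + .single 1 j) 1 := by
  rw [X_pow_eq_monomial, X_pow_eq_monomial, monomial_mul, one_mul]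

theorem coeff_mul_eq_coeff_mul_of_mem_sq_generators {p g : MvPolynomial (Fin 2) R}
    (hg : g ∈ ({(X 0 * X 1) ^ 2, X 0 * X 1 * (X 0 ^ 3 + X 1 ^ 4), (X 0 ^ 3 + X 1 ^ 4) ^ 2} :
      Set (MvPolynomial (Fin 2) R))) :
    coeff (.single 0 4 + .single 1 1) (p * g) = coeff (.single 0 1 + .single 1 5) (p * g) := by
  obtain rfl | rfl | rfl := hg
  · rw [show ((X 0 * X 1) ^ 2 : MvPolynomial (Fin 2) R) = X 0 ^ 2 * X 1 ^ 2 by ring,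
      X_pow_mul_X_pow_eq_monomial]
    simp [coeff_mul_monomial', Finsupp.le_def, Fin.forall_fin_two]
  · rw [show (X 0 * X 1 * (X 0 ^ 3 + X 1 ^ 4) : MvPolynomial (Fin 2) R) =
        X 0 ^ 4 * X 1 ^ 1 + X 0 ^ 1 * X 1 ^ 5 by ring,
      X_pow_mul_X_pow_eq_monomial, X_pow_mul_X_pow_eq_monomial]
    simp [mul_add, coeff_mul_monomial', Finsupp.le_def, Fin.forall_fin_two]
  · rw [show ((X 0 ^ 3 + X 1 ^ 4) ^ 2 : MvPolynomial (Fin 2) R) =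
        X 0 ^ 6 * X 1 ^ 0 + X 0 ^ 3 * X 1 ^ 4 + X 0 ^ 3 * X 1 ^ 4 + X 0 ^ 0 * X 1 ^ 8 by ring]
    simp only [X_pow_mul_X_pow_eq_monomial]
    simp [mul_add, coeff_mul_monomial', Finsupp.le_def, Fin.forall_fin_two]

theorem coeff_eq_of_mem_idealI_sq {f : MvPolynomial (Fin 2) R} (hf : f ∈ idealI R ^ 2) :
    coeff (.single 0 4 + .single 1 1) f = coeff (.single 0 1 + .single 1 5) f := by
  rw [pow_two] at hf
  refine Submodule.mul_induction_on hf (fun i hi j hj => ?_) fun f g hf hg => ?_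
  · obtain ⟨c, d, rfl⟩ := Ideal.mem_span_pair.1 hi
    obtain ⟨c', d', rfl⟩ := Ideal.mem_span_pair.1 hj
    rw [show (c * (X 0 * X 1) + d * (X 0 ^ 3 + X 1 ^ 4)) *
          (c' * (X 0 * X 1) + d' * (X 0 ^ 3 + X 1 ^ 4)) =
        c * c' * (X 0 * X 1) ^ 2 + (c * d' + d * c') * (X 0 * X 1 * (X 0 ^ 3 + X 1 ^ 4)) +
          d * d' * (X 0 ^ 3 + X 1 ^ 4) ^ 2 by ring]
    simp only [coeff_add]
    rw [coeff_mul_eq_coeff_mul_of_mem_sq_generators (by simp),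
      coeff_mul_eq_coeff_mul_of_mem_sq_generators (by simp),
      coeff_mul_eq_coeff_mul_of_mem_sq_generators (by simp)]
  · rw [coeff_add, coeff_add, hf, hg]

theorem X_zero_pow_four_mul_X_one_notMem_idealI_sq [Nontrivial R] :
    (X 0 ^ 4 * X 1 : MvPolynomial (Fin 2) R) ∉ idealI R ^ 2 := fun h => by
  have := coeff_eq_of_mem_idealI_sq h
  rw [← pow_one (X 1), X_pow_mul_X_pow_eq_monomial, coeff_monomial, coeff_monomial] at this
  simp [Finsupp.ext_iff, Fin.forall_fin_two] at this

theorem X_zero_pow_four_mul_X_one_mem_idealJ_sq :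
    (X 0 ^ 4 * X 1 : MvPolynomial (Fin 2) R) ∈ idealJ R ^ 2 := by
  rw [pow_two, show (X 0 ^ 4 * X 1 : MvPolynomial (Fin 2) R) = X 0 ^ 3 * (X 0 * X 1) by ring]
  exact Ideal.mul_mem_mul (Ideal.subset_span (by simp)) (Ideal.subset_span (by simp))

theorem idealI_sq_ne_idealJ_sq [Nontrivial R] : idealI R ^ 2 ≠ idealJ R ^ 2 := fun h =>
  X_zero_pow_four_mul_X_one_notMem_idealI_sq (h ▸ X_zero_pow_four_mul_X_one_mem_idealJ_sq)

end

theorem stmt_2 {K : Type*} [Field K]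
    (J : Ideal (MvPolynomial (Fin 2) K)) (I : Ideal (MvPolynomial (Fin 2) K))
    (hJ : J = Ideal.span {X 0 ^ 3, X 0 * X 1, X 1 ^ 4})
    (hI : I = Ideal.span {X 0 * X 1, X 0 ^ 3 + X 1 ^ 4}) :
    I * J = J ^ 2 ∧ I ^ 2 ≠ J ^ 2 := by
  subst hI hJ
  exact ⟨idealI_mul_idealJ, idealI_sq_ne_idealJ_sq⟩
end

section
/- A commutative ring $R$ satisfies: for all ideals $I \subsetneq J$, $I^n \subsetneq J^n$ for all $n \geq 1$, if and only if for every ideal $I$ of $R$ and every $f \notin I$ with $f^2 \in I^2$ and $fI \subseteq I^2$, one has $f \in I$. -/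
/-!
If `I ⊊ J` but `J ^ 2 ≤ I ^ 2`, any `f ∈ J \ I` satisfies `f ^ 2 ∈ I ^ 2` and `f I ⊆ I ^ 2`;
conversely such an `f` makes `J = I + (f)` a strictly larger ideal with the same square. So the
condition on elements says exactly that `I ≤ J` and `J ^ 2 ≤ I ^ 2` force `I = J`. From there,
`I ^ (n + 1) = J ^ (n + 1)` with `I ≤ J` gives `I ^ p = J ^ p` for all `p ≥ n + 1`, in particular
`(I ^ n) ^ 2 = (J ^ n) ^ 2`, hence `I ^ n = J ^ n`, and we descend to `n = 1`.
-/

namespace Ideal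

variable {R : Type*} [CommRing R]

lemma sup_span_singleton_sq_le {I : Ideal R} {f : R} (hf : f ^ 2 ∈ I ^ 2)
    (hfI : span {f} * I ≤ I ^ 2) : (I ⊔ span {f}) ^ 2 ≤ I ^ 2 := by
  have hff : span {f} * span {f} ≤ I ^ 2 := by
    rwa [span_singleton_mul_span_singleton, ← sq, span_le, Set.singleton_subset_iff]
  rw [sq (I ⊔ _), sup_mul, mul_sup, mul_sup, mul_comm I (span {f}), ← sq]
  exact sup_le (sup_le le_rfl hfI) (sup_le hfI hff)

lemma le_of_le_of_sq_le_sq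
    (h : ∀ (I : Ideal R) (f : R), f ∉ I → f ^ 2 ∈ I ^ 2 → span {f} * I ≤ I ^ 2 → f ∈ I)
    {I J : Ideal R} (hIJ : I ≤ J) (hsq : J ^ 2 ≤ I ^ 2) : J ≤ I := by
  intro f hf
  by_contra hfI
  refine hfI (h I f hfI (hsq (pow_mem_pow hf 2)) ?_)
  calc span {f} * I ≤ J * J := mul_mono ((span_singleton_le_iff_mem J).2 hf) hIJ
    _ = J ^ 2 := (sq J).symm
    _ ≤ I ^ 2 := hsq

lemma pow_add_eq_pow_add_of_le {I J : Ideal R} (hIJ : I ≤ J) {m : ℕ}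
    (h : I ^ (m + 1) = J ^ (m + 1)) (k : ℕ) : I ^ (m + 1 + k) = J ^ (m + 1 + k) := by
  have hmul : I ^ m * J = I ^ (m + 1) := by
    refine le_antisymm ?_ ?_
    · calc I ^ m * J ≤ J ^ m * J := mul_mono_left (pow_right_mono hIJ m)
        _ = I ^ (m + 1) := by rw [← pow_succ, h]
    · rw [pow_succ]
      exact mul_mono_right hIJ
  induction k with
  | zero => exact h
  | succ k ih =>
    calc I ^ (m + 1 + (k + 1)) = I ^ (k + 1) * (I ^ m * J) := by rw [hmul]; ring
      _ = I ^ (m + 1 + k) * J := by ring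
      _ = J ^ (m + 1 + (k + 1)) := by rw [ih]; ring

lemma eq_of_le_of_pow_succ_eq (hsq : ∀ I J : Ideal R, I ≤ J → J ^ 2 ≤ I ^ 2 → J ≤ I)
    {I J : Ideal R} (hIJ : I ≤ J) {n : ℕ} (h : I ^ (n + 1) = J ^ (n + 1)) : I = J := by
  induction n with
  | zero => simpa using h
  | succ n ih =>
    have hsq_eq : (I ^ (n + 1)) ^ 2 = (J ^ (n + 1)) ^ 2 := by
      simpa only [← pow_mul, show n + 1 + 1 + n = (n + 1) * 2 by ring]
        using pow_add_eq_pow_add_of_le hIJ h n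
    have hle := pow_right_mono hIJ (n + 1)
    exact ih (le_antisymm hle (hsq _ _ hle hsq_eq.ge))

end Ideal

open Ideal in
theorem stmt_3 {R : Type*} [CommRing R] :
    (∀ I J : Ideal R, I < J → ∀ n : ℕ, 1 ≤ n → I ^ n < J ^ n) ↔
    (∀ (I : Ideal R) (f : R), f ∉ I → f ^ 2 ∈ I ^ 2 →
      Ideal.span {f} * I ≤ I ^ 2 → f ∈ I) := by
  constructor
  · intro h I f hfI hf hfI2
    exfalso
    have hlt : I < I ⊔ span {f} :=
      left_lt_sup.2 fun hle => hfI (hle (mem_span_singleton_self f))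
    exact (h _ _ hlt 2 one_le_two).not_ge (sup_span_singleton_sq_le hf hfI2)
  · intro h I J hlt n hn
    obtain ⟨m, rfl⟩ := Nat.exists_eq_add_of_le' hn
    refine lt_of_le_of_ne (pow_right_mono hlt.le _) fun he => hlt.ne ?_
    exact eq_of_le_of_pow_succ_eq (fun _ _ => le_of_le_of_sq_le_sq h) hlt.le he
end

section
/- In the ring $R = \mathbb{Z}[X^3, X^4, X^5]$ (the subring of $\mathbb{Z}[X]$ generated by $X^3, X^4, X^5$), the ideals $I = (X^3, X^4, 2X^5)$ and $J = (X^3, X^4, X^5)$ satisfy $I \subsetneq J$ but $I^2 = J^2$. -/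
/-!
Every element of `ℤ[X³, X⁴, X⁵]` has vanishing coefficients at `X` and `X²`, so comparing
coefficients of `X⁵` in `x₅ = a x₃ + b x₄ + c (2 x₅)` gives `1 = 2 c(0)`: hence `x₅ ∉ I`.
The relations `x₃x₅ = x₄²`, `x₄x₅ = x₃³`, `x₅² = x₃²x₄` give `J² = (x₃, x₄)²`, and
`(x₃, x₄) ≤ I ≤ J` squeezes `I²` between two equal ideals.
-/

open Polynomial

namespace Polynomial

/-- `A + X ^ n A[X]`, the semigroup ring of `{0} ∪ [n, ∞)`. -/
def gapSubalgebra (A : Type*) [CommSemiring A] (n : ℕ) : Subalgebra A A[X] where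
  carrier := {p | ∀ k, 0 < k → k < n → p.coeff k = 0}
  mul_mem' {p q} hp hq k hk hkn := by
    rw [coeff_mul]
    refine Finset.sum_eq_zero fun ij hij => ?_
    have hij : ij.1 + ij.2 = k := Finset.HasAntidiagonal.mem_antidiagonal.1 hij
    rcases Nat.eq_zero_or_pos ij.1 with hi | hi
    · rw [hq ij.2 (by omega) (by omega), mul_zero]
    · rw [hp ij.1 hi (by omega), zero_mul]
  add_mem' hp hq k hk hkn := by rw [coeff_add, hp k hk hkn, hq k hk hkn, add_zero]
  algebraMap_mem' r k hk _ := by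
    rw [algebraMap_apply, Algebra.algebraMap_self, RingHom.id_apply, coeff_C_of_ne_zero hk.ne']

variable {A : Type*} [CommSemiring A] {n : ℕ}

theorem coeff_eq_zero_of_mem_gapSubalgebra {p : A[X]} (hp : p ∈ gapSubalgebra A n) {k : ℕ}
    (hk : 0 < k) (hkn : k < n) : p.coeff k = 0 :=
  hp k hk hkn

theorem X_pow_mem_gapSubalgebra {m : ℕ} (hm : n ≤ m) : (X ^ m : A[X]) ∈ gapSubalgebra A n :=
  fun k _ hkn => by rw [coeff_X_pow, if_neg (by omega)]

end Polynomial

theorem adjoin_X_pow_three_four_five_le_gapSubalgebra :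
    Algebra.adjoin ℤ ({X ^ 3, X ^ 4, X ^ 5} : Set ℤ[X]) ≤ gapSubalgebra ℤ 3 := by
  refine Algebra.adjoin_le ?_
  rintro p (rfl | rfl | rfl) <;> exact X_pow_mem_gapSubalgebra (by norm_num)

theorem X_pow_five_notMem_span (S : Subalgebra ℤ ℤ[X]) (hS : S ≤ gapSubalgebra ℤ 3)
    (x3 x4 x5 : S) (h3 : (x3 : ℤ[X]) = X ^ 3) (h4 : (x4 : ℤ[X]) = X ^ 4)
    (h5 : (x5 : ℤ[X]) = X ^ 5) : x5 ∉ Ideal.span {x3, x4, 2 * x5} := by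
  intro hx
  obtain ⟨a, y, hy, hxy⟩ := Ideal.mem_span_insert.1 hx
  obtain ⟨b, c, rfl⟩ := Ideal.mem_span_pair.1 hy
  rw [two_mul, mul_add] at hxy
  have h := congrArg (fun p : S => (p : ℤ[X]).coeff 5) hxy
  push_cast [h3, h4, h5] at h
  simp only [coeff_add, coeff_mul_X_pow', coeff_X_pow_self] at h
  norm_num at h
  rw [coeff_eq_zero_of_mem_gapSubalgebra (hS a.2) two_pos (by norm_num),
    coeff_eq_zero_of_mem_gapSubalgebra (hS b.2) one_pos (by norm_num)] at h
  omega

theorem Ideal.sq_span_insert_eq {A : Type*} [CommSemiring A] {s : Set A} {c : A}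
    (hs : ∀ a ∈ s, a * c ∈ Ideal.span s ^ 2) (hc : c * c ∈ Ideal.span s ^ 2) :
    Ideal.span (insert c s) ^ 2 = Ideal.span s ^ 2 := by
  refine le_antisymm ?_ (Ideal.pow_right_mono (Ideal.span_mono (Set.subset_insert c s)) 2)
  rw [sq, Ideal.span_mul_span', Ideal.span_le]
  rintro _ ⟨x, hx, y, hy, rfl⟩
  rcases hx with rfl | hx <;> rcases hy with rfl | hy
  · exact hc
  · simpa only [mul_comm, SetLike.mem_coe] using hs y hy
  · exact hs x hx
  · exact sq (Ideal.span s) ▸ Ideal.mul_mem_mul (Ideal.subset_span hx) (Ideal.subset_span hy)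

theorem Ideal.span_triple_sq_eq_span_pair_sq {A : Type*} [CommSemiring A] {a b c : A}
    (hac : a * c = b * b) (hbc : b * c = a * a * a) (hcc : c * c = a * a * b) :
    Ideal.span {a, b, c} ^ 2 = Ideal.span {a, b} ^ 2 := by
  set K := Ideal.span {a, b}
  have mem_sq : ∀ x ∈ K, ∀ y ∈ K, x * y ∈ K ^ 2 := fun x hx y hy =>
    sq K ▸ Ideal.mul_mem_mul hx hy
  have ha : a ∈ K := Ideal.subset_span (by simp)
  have hb : b ∈ K := Ideal.subset_span (by simp)
  rw [Set.pair_comm b c, Set.insert_comm]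
  refine Ideal.sq_span_insert_eq ?_ (hcc ▸ Ideal.mul_mem_right _ _ (mem_sq _ ha _ ha))
  rintro x (rfl | rfl)
  · exact hac ▸ mem_sq _ hb _ hb
  · exact hbc ▸ Ideal.mul_mem_right _ _ (mem_sq _ ha _ ha)

theorem stmt_4
    (R : Subalgebra ℤ (Polynomial ℤ))
    (hR : R = Algebra.adjoin ℤ ({X ^ 3, X ^ 4, X ^ 5} : Set (Polynomial ℤ)))
    (x3 x4 x5 : R)
    (h3 : (x3 : Polynomial ℤ) = X ^ 3) (h4 : (x4 : Polynomial ℤ) = X ^ 4)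
    (h5 : (x5 : Polynomial ℤ) = X ^ 5) :
    Ideal.span ({x3, x4, 2 * x5} : Set R) < Ideal.span ({x3, x4, x5} : Set R) ∧
    (Ideal.span ({x3, x4, 2 * x5} : Set R)) ^ 2 = (Ideal.span ({x3, x4, x5} : Set R)) ^ 2 := by
  have hKI : Ideal.span {x3, x4} ≤ Ideal.span {x3, x4, 2 * x5} :=
    Ideal.span_mono (Set.insert_subset_insert (by simp))
  have hIJ : Ideal.span {x3, x4, 2 * x5} ≤ Ideal.span ({x3, x4, x5} : Set R) := by
    simp only [Ideal.span_le, Set.insert_subset_iff, Set.singleton_subset_iff, SetLike.mem_coe]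
    exact ⟨Ideal.subset_span (by simp), Ideal.subset_span (by simp),
      Ideal.mul_mem_left _ 2 (Ideal.subset_span (by simp))⟩
  have hJK : Ideal.span ({x3, x4, x5} : Set R) ^ 2 = Ideal.span {x3, x4} ^ 2 :=
    Ideal.span_triple_sq_eq_span_pair_sq
      (Subtype.ext (by push_cast [h3, h4, h5]; ring))
      (Subtype.ext (by push_cast [h3, h4, h5]; ring))
      (Subtype.ext (by push_cast [h3, h4, h5]; ring))
  have hx5 : x5 ∉ Ideal.span {x3, x4, 2 * x5} :=
    X_pow_five_notMem_span R (hR ▸ adjoin_X_pow_three_four_five_le_gapSubalgebra)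
      x3 x4 x5 h3 h4 h5
  exact ⟨SetLike.lt_iff_le_and_exists.2 ⟨hIJ, x5, Ideal.subset_span (by simp), hx5⟩,
    le_antisymm (Ideal.pow_right_mono hIJ 2) (hJK ▸ Ideal.pow_right_mono hKI 2)⟩
end

section
/- Let $R$ be an integral domain which is not a field. Then there exist ideals $I \subsetneq J$ in the polynomial ring $R[X]$ with $I^2 = J^2$. Specifically, for a nonzero nonunit $a \in R$, $I = (X^4, a^3 X, a X^3, a^4)$ and $J = I + (a^2 X^2)$ satisfy $I \subsetneq J$ and $I^2 = J^2$. -/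
/-!
With `m = a²X²`, every product of `m` with a generator of `I`, and `m²` itself, is a product of
two generators of `I`, so adjoining `m` to `I` does not change its square. On the other hand `m ∉ I`:
`I` lies in `(a³, X³)`, and the `X²`-coefficient of `a²X² ∈ (a³, X³)` would give `a³ ∣ a²`, which
is impossible for a nonzero nonunit of a domain.
-/

open Polynomial

namespace Ideal

variable {R : Type*} [CommSemiring R]

theorem add_sq_eq_sq {I K : Ideal R} (hIK : I * K ≤ I ^ 2) (hK : K ^ 2 ≤ I ^ 2) :
    (I + K) ^ 2 = I ^ 2 := by
  refine le_antisymm ?_ (pow_le_pow_left' le_self_add 2)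
  rw [add_sq, mul_assoc, two_mul, add_eq_sup, add_eq_sup, add_eq_sup, sup_idem]
  exact sup_le (sup_le le_rfl hIK) hK

theorem span_mul_span_singleton_le {S : Set R} {m : R} {L : Ideal R}
    (h : ∀ s ∈ S, s * m ∈ L) : span S * span {m} ≤ L := by
  rw [span_mul_span', Set.mul_singleton, span_le]
  rintro _ ⟨s, hs, rfl⟩
  exact h s hs

end Ideal

namespace Polynomial

variable {R : Type*} [CommSemiring R]

theorem dvd_of_C_mul_X_pow_mem_span_C_X_pow {r s : R} {n k : ℕ} (hnk : n < k)
    (h : C r * X ^ n ∈ Ideal.span {C s, X ^ k}) : s ∣ r := by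
  obtain ⟨f, g, hfg⟩ := Ideal.mem_span_pair.mp h
  have := congrArg (coeff · n) hfg
  simp only [coeff_add, coeff_mul_C, coeff_mul_X_pow', if_neg (Nat.not_le_of_lt hnk), add_zero,
    le_refl, if_true, Nat.sub_self, coeff_C_zero] at this
  exact ⟨f.coeff n, this.symm.trans (mul_comm _ _)⟩

end Polynomial

theorem stmt_10_general {R : Type*} [CommRing R] [IsDomain R]
    (a : R) (ha : a ≠ 0) (hu : ¬ IsUnit a)
    (I J : Ideal (Polynomial R))
    (hI : I = Ideal.span {X ^ 4, C a ^ 3 * X, C a * X ^ 3, C a ^ 4})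
    (hJ : J = I + Ideal.span {C a ^ 2 * X ^ 2}) :
    I < J ∧ I ^ 2 = J ^ 2 := by
  have hX4 : X ^ 4 ∈ I := hI ▸ Ideal.subset_span (by simp)
  have ha3X : C a ^ 3 * X ∈ I := hI ▸ Ideal.subset_span (by simp)
  have haX3 : C a * X ^ 3 ∈ I := hI ▸ Ideal.subset_span (by simp)
  have ha4 : C a ^ 4 ∈ I := hI ▸ Ideal.subset_span (by simp)
  have hm : C a ^ 2 * X ^ 2 ∉ I := by
    intro hmI
    have hIle : I ≤ Ideal.span {C (a ^ 3), X ^ 3} := by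
      rw [hI, Ideal.span_le, Set.insert_subset_iff, Set.insert_subset_iff, Set.insert_subset_iff,
        Set.singleton_subset_iff]
      refine ⟨?_, ?_, ?_, ?_⟩ <;> refine Ideal.mem_span_pair.mpr ?_
      exacts [⟨0, X, by ring⟩, ⟨X, 0, by rw [map_pow]; ring⟩, ⟨0, C a, by ring⟩,
        ⟨C a, 0, by rw [map_pow]; ring⟩]
    have hdvd : a ^ 3 ∣ a ^ 2 :=
      dvd_of_C_mul_X_pow_mem_span_C_X_pow (by norm_num : 2 < 3) (by simpa using hIle hmI)
    exact absurd ((pow_dvd_pow_iff ha hu).mp hdvd) (by norm_num)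
  subst hJ
  refine ⟨left_lt_sup.mpr (by rwa [Ideal.span_singleton_le_iff_mem]),
    (Ideal.add_sq_eq_sq ?_ ?_).symm⟩
  · nth_rw 1 [hI]
    refine Ideal.span_mul_span_singleton_le ?_
    simp only [Set.mem_insert_iff, Set.mem_singleton_iff, forall_eq_or_imp, forall_eq, sq I]
    refine ⟨?_, ?_, ?_, ?_⟩
    · convert Ideal.mul_mem_mul haX3 haX3 using 1; ring
    · convert Ideal.mul_mem_mul ha4 haX3 using 1; ring
    · convert Ideal.mul_mem_mul hX4 ha3X using 1; ring
    · convert Ideal.mul_mem_mul ha3X ha3X using 1; ring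
  · rw [Ideal.span_singleton_pow, Ideal.span_singleton_le_iff_mem, sq I]
    convert Ideal.mul_mem_mul hX4 ha4 using 1; ring

theorem stmt_10 {R : Type*} [CommRing R] [IsDomain R] (hnf : ¬ IsField R)
    (a : R) (ha : a ≠ 0) (hu : ¬ IsUnit a)
    (I J : Ideal (Polynomial R))
    (hI : I = Ideal.span {X ^ 4, C a ^ 3 * X, C a * X ^ 3, C a ^ 4})
    (hJ : J = I + Ideal.span {C a ^ 2 * X ^ 2}) :
    I < J ∧ I ^ 2 = J ^ 2 :=
  stmt_10_general a ha hu I J hI hJ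
end

section
/- Let $S$ be a faithfully flat extension of a commutative ring $R$ and $J$ an ideal of $R$. If $JS$ is a big ideal of $S$, then $J$ is a big ideal of $R$. -/
/-- An ideal `J` is big if every strictly smaller ideal has strictly smaller powers. -/
def IsBigIdeal {R : Type*} [CommRing R] (J : Ideal R) : Prop :=
  ∀ I : Ideal R, I < J → ∀ n : ℕ, 1 ≤ n → I ^ n < J ^ n

theorem IsBigIdeal.of_map {R S : Type*} [CommRing R] [CommRing S] {f : R →+* S}
    (hf : Function.Injective (Ideal.map f : Ideal R → Ideal S)) {J : Ideal R}
    (h : IsBigIdeal (J.map f)) : IsBigIdeal J := by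
  have hmap : StrictMono (Ideal.map f : Ideal R → Ideal S) :=
    Monotone.strictMono_of_injective (fun _ _ => Ideal.map_mono) hf
  intro I hIJ n hn
  have hlt := h _ (hmap hIJ) n hn
  rw [← Ideal.map_pow, ← Ideal.map_pow] at hlt
  exact (Ideal.pow_right_mono hIJ.le n).lt_of_ne fun e => hlt.ne (congrArg _ e)

theorem stmt_13 {R S : Type*} [CommRing R] [CommRing S] [Algebra R S]
    [Module.FaithfullyFlat R S] (J : Ideal R)
    (h : IsBigIdeal (J.map (algebraMap R S))) : IsBigIdeal J :=
  h.of_map Ideal.map_injective_of_faithfullyFlat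
end

section
/- Let $J$ be a big ideal in an integral domain $R$ and $A \subsetneq R$ an invertible ideal. Then $AJ$ is a big ideal. -/
open nonZeroDivisors FractionalIdeal

namespace Ideal

variable {R K : Type*} [CommRing R] [CommRing K] [Algebra R K] [IsFractionRing R K]
  {A I J : Ideal R}

theorem mul_le_mul_iff_left_of_isUnit (hA : IsUnit (A : FractionalIdeal R⁰ K)) :
    A * I ≤ A * J ↔ I ≤ J := by
  rw [← coeIdeal_le_coeIdeal K, ← coeIdeal_le_coeIdeal K, coeIdeal_mul, coeIdeal_mul]
  exact hA.mul_le_mul_left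

theorem mul_lt_mul_iff_left_of_isUnit (hA : IsUnit (A : FractionalIdeal R⁰ K)) :
    A * I < A * J ↔ I < J := by
  simp only [lt_iff_le_not_ge, mul_le_mul_iff_left_of_isUnit hA]

theorem exists_eq_mul_of_le_mul_of_isUnit (hA : IsUnit (A : FractionalIdeal R⁰ K))
    (h : I ≤ A * J) : ∃ I', I = A * I' := by
  obtain ⟨a, ha⟩ := hA
  have hIJ : ↑a⁻¹ * (I : FractionalIdeal R⁰ K) ≤ J :=
    calc ↑a⁻¹ * (I : FractionalIdeal R⁰ K) ≤ ↑a⁻¹ * (a * J) := by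
          gcongr
          rw [ha, ← coeIdeal_mul]
          exact (coeIdeal_le_coeIdeal K).mpr h
      _ = J := by rw [Units.inv_mul_cancel_left]
  obtain ⟨I', hI'⟩ := le_one_iff_exists_coeIdeal.mp (hIJ.trans coeIdeal_le_one)
  refine ⟨I', coeIdeal_injective' (P := K) le_rfl ?_⟩
  simp only [coeIdeal_mul, hI', ← ha, Units.mul_inv_cancel_left]

end Ideal

theorem stmt_14_general {R : Type*} [CommRing R] (J A : Ideal R)
    (hJ : IsBigIdeal J)
    (hinv : IsUnit (A : FractionalIdeal (nonZeroDivisors R) (FractionRing R))) :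
    IsBigIdeal (A * J) := by
  intro I hI n hn
  obtain ⟨I', rfl⟩ := Ideal.exists_eq_mul_of_le_mul_of_isUnit hinv hI.le
  have hAn : IsUnit ((A ^ n : Ideal R) : FractionalIdeal R⁰ (FractionRing R)) := by
    rw [coeIdeal_pow]
    exact hinv.pow n
  rw [mul_pow, mul_pow, Ideal.mul_lt_mul_iff_left_of_isUnit hAn]
  exact hJ I' ((Ideal.mul_lt_mul_iff_left_of_isUnit hinv).mp hI) n hn

theorem stmt_14 {R : Type*} [CommRing R] [IsDomain R] (J A : Ideal R)
    (hJ : IsBigIdeal J) (hA : A < ⊤)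
    (hinv : IsUnit (A : FractionalIdeal (nonZeroDivisors R) (FractionRing R))) :
    IsBigIdeal (A * J) :=
  stmt_14_general J A hJ hinv
end

section
/- Let $I$ be an ideal in a commutative Noetherian ring $R$. If $I_M$ is a big ideal in the localization $R_M$ for every maximal ideal $M \supseteq I$, then $I$ is a big ideal in $R$. -/
/-! Localization commutes with powers and detects equality of ideals, so an equality
`J ^ n = I ^ n` with `J < I` survives at a maximal ideal where `J` and `I` still differ.
At maximal ideals not containing `I` the localization of `I` is the unit ideal, which is
always big. -/

theorem isBigIdeal_top {R : Type*} [CommRing R] : IsBigIdeal (⊤ : Ideal R) := by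
  intro J hJ n hn
  rw [Ideal.top_pow]
  exact (Ideal.pow_le_self (by omega)).trans_lt hJ

theorem IsBigIdeal.of_localization_maximal {R : Type*} [CommRing R] {I : Ideal R}
    (h : ∀ (M : Ideal R) (_ : M.IsMaximal),
      IsBigIdeal (I.map (algebraMap R (Localization.AtPrime M)))) :
    IsBigIdeal I := by
  intro J hJ n hn
  refine (pow_le_pow_left' hJ.le n).lt_of_ne fun hpow ↦ ?_
  obtain ⟨M, hM, hMne⟩ : ∃ (M : Ideal R) (_ : M.IsMaximal),
      J.map (algebraMap R (Localization.AtPrime M)) ≠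
        I.map (algebraMap R (Localization.AtPrime M)) := by
    by_contra! hall
    exact hJ.ne (Ideal.eq_of_localization_maximal hall)
  have hlt := (Ideal.map_mono hJ.le).lt_of_ne hMne
  refine (h M hM _ hlt n hn).ne ?_
  rw [← Ideal.map_pow, ← Ideal.map_pow, hpow]

theorem stmt_16_general {R : Type*} [CommRing R] (I : Ideal R)
    (h : ∀ (M : Ideal R) (hM : M.IsMaximal), I ≤ M →
      haveI : M.IsPrime := hM.isPrime
      IsBigIdeal (I.map (algebraMap R (Localization.AtPrime M)))) :
    IsBigIdeal I := by
  refine IsBigIdeal.of_localization_maximal fun M hM ↦ ?_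
  by_cases hIM : I ≤ M
  · exact h M hM hIM
  · rw [IsLocalization.AtPrime.map_eq_top_of_not_le _ hIM]
    exact isBigIdeal_top

theorem stmt_16 {R : Type*} [CommRing R] [IsNoetherianRing R] (I : Ideal R)
    (h : ∀ (M : Ideal R) (hM : M.IsMaximal), I ≤ M →
      haveI : M.IsPrime := hM.isPrime
      IsBigIdeal (I.map (algebraMap R (Localization.AtPrime M)))) :
    IsBigIdeal I :=
  stmt_16_general I h
end

section
/- Let $R$ be an integral domain in which every ideal generated by at most three elements is a big ideal. If $x, y \in R$ are nonzero with $x \notin Ry$ and $x^2 \notin Ry$, then $x/y$ is not integral over $R$ (as an element of the fraction field). -/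
/-!
Let `S = (x, y)`. An integral equation of degree `n` for `x / y`, cleared of denominators, puts
`x ^ n` into `y S ^ (n - 1)`, so `(y)` is a reduction of `S`: `S ^ n = y S ^ (n - 1)`. Then
`I = y S` and `J = S ^ 2 = (x ^ 2, x y, y ^ 2)` have the same `n`-th power, while `I ⊊ J`
because `x ^ 2 ∉ (y)`; so the three-generated ideal `J` is not big.
-/

open Polynomial

theorem pow_succ_mul_eq_sq_pow_succ {M : Type*} [CommMonoid M] {a b : M} {m : ℕ}
    (h : a ^ (m + 1) = b * a ^ m) : (b * a) ^ (m + 1) = (a ^ 2) ^ (m + 1) := by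
  have key : ∀ k, a ^ (m + k) = b ^ k * a ^ m := by
    intro k
    induction k with
    | zero => simp
    | succ k ih =>
      rw [← add_assoc, pow_succ, ih, mul_assoc, ← pow_succ, h, pow_succ b k, mul_assoc]
  rw [← pow_mul, show 2 * (m + 1) = m + (m + 2) by ring, key, mul_pow, h, pow_succ b (m + 1),
    mul_assoc]

namespace Ideal

variable {R : Type*} [CommRing R]

theorem sup_pow_succ_le (I J : Ideal R) (k : ℕ) :
    (I ⊔ J) ^ (k + 1) ≤ I ^ (k + 1) ⊔ J * (I ⊔ J) ^ k := by
  induction k with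
  | zero => simp
  | succ k ih =>
    calc (I ⊔ J) ^ (k + 2) = (I ⊔ J) ^ (k + 1) * I ⊔ J * (I ⊔ J) ^ (k + 1) := by
          rw [pow_succ, mul_sup, mul_comm _ J]
      _ ≤ (I ^ (k + 1) ⊔ J * (I ⊔ J) ^ k) * I ⊔ J * (I ⊔ J) ^ (k + 1) := by gcongr
      _ = I ^ (k + 2) ⊔ J * ((I ⊔ J) ^ k * I) ⊔ J * (I ⊔ J) ^ (k + 1) := by
          rw [sup_mul, ← pow_succ, mul_assoc]
      _ ≤ I ^ (k + 2) ⊔ J * (I ⊔ J) ^ (k + 1) :=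
          sup_le (sup_le_sup_left (mul_mono_right (by
            rw [pow_succ]; exact mul_mono_right le_sup_left)) _) le_sup_right

theorem sup_pow_succ_eq_mul_pow {I J : Ideal R} {k : ℕ} (h : I ^ (k + 1) ≤ J * (I ⊔ J) ^ k) :
    (I ⊔ J) ^ (k + 1) = J * (I ⊔ J) ^ k :=
  le_antisymm ((sup_pow_succ_le I J k).trans (sup_le h le_rfl))
    (by rw [pow_succ']; exact mul_mono_left le_sup_right)

theorem span_pair_sq (x y : R) : span {x ^ 2, x * y, y ^ 2} = span {x, y} ^ 2 := by
  rw [pow_two (span _), span_mul_span']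
  congr 1
  ext r
  simp only [Set.mem_mul, Set.mem_insert_iff, Set.mem_singleton_iff, exists_eq_or_imp,
    exists_eq_left, sq, mul_comm y x]
  tauto

theorem pow_succ_mem_span_mul_of_aeval_scaleRoots_eq_zero {p : R[X]} (hp : p.Monic) {m : ℕ}
    (hdeg : p.natDegree = m + 1) {x y : R} (h : aeval x (p.scaleRoots y) = 0) :
    x ^ (m + 1) ∈ span {y} * span {x, y} ^ m := by
  rw [aeval_eq_sum_range, natDegree_scaleRoots, hdeg, Finset.sum_range_succ, ← hdeg,
    coeff_scaleRoots_natDegree, hp.leadingCoeff, one_smul, hdeg, add_eq_zero_iff_neg_eq] at h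
  rw [← h]
  refine neg_mem (sum_mem _ fun i hi => ?_)
  have hi : i ≤ m := Nat.lt_succ_iff.mp (Finset.mem_range.mp hi)
  have hxy : y ^ (m - i) * x ^ i ∈ span {x, y} ^ m := by
    have := mul_mem_mul (pow_mem_pow (subset_span (by simp) : y ∈ span {x, y}) (m - i))
      (pow_mem_pow (subset_span (by simp) : x ∈ span {x, y}) i)
    rwa [← pow_add, Nat.sub_add_cancel hi] at this
  rw [coeff_scaleRoots, hdeg, smul_eq_mul, Nat.sub_add_comm hi, pow_succ', mul_assoc, mul_assoc]
  exact mul_mem_left _ _ (mul_mem_mul (mem_span_singleton_self y) hxy)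

theorem exists_pow_succ_mem_span_mul_of_isIntegral_div {K : Type*} [Field K] [Algebra R K]
    (hinj : Function.Injective (algebraMap R K)) {x y : R} (hy : y ∈ nonZeroDivisors R)
    (h : IsIntegral R (algebraMap R K x / algebraMap R K y)) :
    ∃ m : ℕ, x ^ (m + 1) ∈ span {y} * span {x, y} ^ m := by
  obtain ⟨p, hp, hroot⟩ := h
  have hdeg : p.natDegree ≠ 0 := fun h0 => by simp [hp.natDegree_eq_zero.mp h0] at hroot
  obtain ⟨m, hm⟩ := Nat.exists_eq_succ_of_ne_zero hdeg
  refine ⟨m, pow_succ_mem_span_mul_of_aeval_scaleRoots_eq_zero hp hm (hinj ?_)⟩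
  rw [← aeval_algebraMap_apply, map_zero]
  exact scaleRoots_aeval_eq_zero_of_aeval_div_eq_zero hinj hroot hy

theorem not_isBigIdeal_sq {S T : Ideal R} {m : ℕ} (hred : S ^ (m + 1) = T * S ^ m)
    (hlt : T * S < S ^ 2) : ¬ IsBigIdeal (S ^ 2) := fun hbig =>
  (hbig _ hlt (m + 1) le_add_self).ne (pow_succ_mul_eq_sq_pow_succ hred)

end Ideal

open Ideal in
theorem stmt_17_general {R : Type*} [CommRing R] [IsDomain R]
    (hbig : ∀ (s : Finset R), s.card ≤ 3 → IsBigIdeal (Ideal.span (s : Set R)))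
    (x y : R) (hy : y ≠ 0)
    (h2 : x ^ 2 ∉ Ideal.span ({y} : Set R)) :
    ¬ IsIntegral R (algebraMap R (FractionRing R) x / algebraMap R (FractionRing R) y) := by
  classical
  intro hint
  obtain ⟨m, hm⟩ := exists_pow_succ_mem_span_mul_of_isIntegral_div
    (IsFractionRing.injective R (FractionRing R)) (mem_nonZeroDivisors_of_ne_zero hy) hint
  have hred : span {x, y} ^ (m + 1) = span {y} * span {x, y} ^ m := by
    rw [span_insert] at hm ⊢
    exact sup_pow_succ_eq_mul_pow (by rwa [span_singleton_pow, span_singleton_le_iff_mem])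
  have hlt : span {y} * span {x, y} < span {x, y} ^ 2 :=
    SetLike.lt_iff_le_and_exists.mpr ⟨by rw [sq]; exact mul_mono_left (span_mono (by simp)),
      x ^ 2, pow_mem_pow (subset_span (by simp)) 2, fun h => h2 (mul_le_left h)⟩
  have hbig_sq := hbig {x ^ 2, x * y, y ^ 2} Finset.card_le_three
  rw [Finset.coe_insert, Finset.coe_pair, span_pair_sq] at hbig_sq
  exact not_isBigIdeal_sq hred hlt hbig_sq

theorem stmt_17 {R : Type*} [CommRing R] [IsDomain R]
    (hbig : ∀ (s : Finset R), s.card ≤ 3 → IsBigIdeal (Ideal.span (s : Set R)))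
    (x y : R) (hx : x ≠ 0) (hy : y ≠ 0)
    (h1 : x ∉ Ideal.span ({y} : Set R)) (h2 : x ^ 2 ∉ Ideal.span ({y} : Set R)) :
    ¬ IsIntegral R (algebraMap R (FractionRing R) x / algebraMap R (FractionRing R) y) :=
  stmt_17_general hbig x y hy h2
end

section
/- Let $R$ be an integral domain in which every finitely generated ideal is a big ideal. Then $R$ has no regular sequence of length $\geq 2$: there do not exist $a, b \in R$ such that $a$ is a nonzerodivisor, $b$ is a nonzerodivisor on $R/(a)$, and $(a,b) \neq R$. -/
open Ideal

section

variable {R : Type*} [CommRing R]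

theorem IsBigIdeal.eq_of_le_of_sq_le {I J : Ideal R} (hJ : IsBigIdeal J) (hIJ : I ≤ J)
    (hsq : J ^ 2 ≤ I ^ 2) : I = J := by
  by_contra hne
  exact (hJ I (hIJ.lt_of_ne hne) 2 one_le_two).not_ge hsq

theorem Ideal.span_insert_mul_self_le {x : R} {S : Set R} (hxx : x * x ∈ span S * span S)
    (hxS : ∀ y ∈ S, x * y ∈ span S * span S) :
    span (insert x S) * span (insert x S) ≤ span S * span S := by
  rw [span_mul_span', span_le]
  rintro _ ⟨u, hu, v, hv, rfl⟩
  rcases hu with rfl | hu <;> rcases hv with rfl | hv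
  · exact hxx
  · exact hxS v hv
  · simpa only [mul_comm, SetLike.mem_coe] using hxS u hu
  · exact mul_mem_mul (subset_span hu) (subset_span hv)

theorem sq_span_insert_sq_mul_sq_le (a b : R) :
    span (insert (a ^ 2 * b ^ 2) {a ^ 4, a ^ 3 * b, a * b ^ 3, b ^ 4}) ^ 2 ≤
      span {a ^ 4, a ^ 3 * b, a * b ^ 3, b ^ 4} ^ 2 := by
  set S : Set R := {a ^ 4, a ^ 3 * b, a * b ^ 3, b ^ 4}
  have hS {u v : R} (hu : u ∈ S) (hv : v ∈ S) : u * v ∈ span S * span S :=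
    mul_mem_mul (subset_span hu) (subset_span hv)
  rw [sq (span (insert _ S)), sq (span S)]
  refine span_insert_mul_self_le ?_ ?_
  · rw [show a ^ 2 * b ^ 2 * (a ^ 2 * b ^ 2) = a ^ 3 * b * (a * b ^ 3) by ring]
    exact hS (by simp [S]) (by simp [S])
  · rintro y (rfl | rfl | rfl | rfl)
    · rw [show a ^ 2 * b ^ 2 * a ^ 4 = a ^ 3 * b * (a ^ 3 * b) by ring]
      exact hS (by simp [S]) (by simp [S])
    · rw [show a ^ 2 * b ^ 2 * (a ^ 3 * b) = a ^ 4 * (a * b ^ 3) by ring]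
      exact hS (by simp [S]) (by simp [S])
    · rw [show a ^ 2 * b ^ 2 * (a * b ^ 3) = a ^ 3 * b * b ^ 4 by ring]
      exact hS (by simp [S]) (by simp [S])
    · rw [show a ^ 2 * b ^ 2 * b ^ 4 = a * b ^ 3 * (a * b ^ 3) by ring]
      exact hS (by simp [S]) (by simp [S])

theorem span_quartics_le_span_cubes (a b : R) :
    span {a ^ 4, a ^ 3 * b, a * b ^ 3, b ^ 4} ≤ span {a ^ 3, b ^ 3} := by
  simp only [span_le, Set.insert_subset_iff, Set.singleton_subset_iff, SetLike.mem_coe,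
    mem_span_pair]
  exact ⟨⟨a, 0, by ring⟩, ⟨b, 0, by ring⟩, ⟨0, a, by ring⟩, ⟨0, b, by ring⟩⟩

theorem dvd_of_dvd_pow_mul {a b x : R} (hreg : ∀ y, a ∣ b * y → a ∣ y) (n : ℕ)
    (h : a ∣ b ^ n * x) : a ∣ x := by
  induction n with
  | zero => simpa using h
  | succ n ih => exact ih (hreg _ (by rwa [pow_succ', mul_assoc] at h))

theorem span_pair_eq_top_of_pow_mul_pow_mem {a b : R} (hreg : ∀ x, a ∣ b * x → a ∣ x)
    (ha : a ∈ nonZeroDivisors R) (j : ℕ) :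
    ∀ i : ℕ, a ^ i * b ^ j ∈ span {a ^ (i + 1), b ^ (j + 1)} → span {a, b} = ⊤
  | 0, h => by
    obtain ⟨r, s, hrs⟩ := mem_span_pair.1 h
    obtain ⟨t, ht⟩ := dvd_of_dvd_pow_mul hreg j
      (⟨r, by linear_combination -hrs⟩ : a ∣ b ^ j * (1 - s * b))
    rw [eq_top_iff_one, mem_span_pair]
    exact ⟨t, s, by linear_combination -ht⟩
  | i + 1, h => by
    obtain ⟨r, s, hrs⟩ := mem_span_pair.1 h
    obtain ⟨s', rfl⟩ := dvd_of_dvd_pow_mul hreg (j + 1)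
      (⟨a ^ i * b ^ j - r * a ^ (i + 1), by linear_combination hrs⟩ : a ∣ b ^ (j + 1) * s)
    refine span_pair_eq_top_of_pow_mul_pow_mem hreg ha j i (mem_span_pair.2 ⟨r, s', ?_⟩)
    refine (mul_cancel_left_mem_nonZeroDivisors ha).1 ?_
    linear_combination hrs

end

theorem stmt_18_general {R : Type*} [CommRing R]
    (hbig : ∀ J : Ideal R, J.FG → IsBigIdeal J) :
    ¬ ∃ a b : R, a ∈ nonZeroDivisors R ∧
      (∀ x : R, b * x ∈ Ideal.span ({a} : Set R) → x ∈ Ideal.span ({a} : Set R)) ∧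
      Ideal.span ({a, b} : Set R) ≠ ⊤ := by
  rintro ⟨a, b, ha, hreg, hne⟩
  have hreg' (x : R) (h : a ∣ b * x) : a ∣ x :=
    mem_span_singleton.1 (hreg x (mem_span_singleton.2 h))
  have hI : span {a ^ 4, a ^ 3 * b, a * b ^ 3, b ^ 4} =
      span (insert (a ^ 2 * b ^ 2) {a ^ 4, a ^ 3 * b, a * b ^ 3, b ^ 4}) :=
    (hbig _ (Submodule.fg_span (Set.toFinite _))).eq_of_le_of_sq_le
      (span_mono (Set.subset_insert _ _)) (sq_span_insert_sq_mul_sq_le a b)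
  have hmem : a ^ 2 * b ^ 2 ∈ span {a ^ (2 + 1), b ^ (2 + 1)} :=
    span_quartics_le_span_cubes a b (hI ▸ subset_span (Set.mem_insert _ _))
  exact hne (span_pair_eq_top_of_pow_mul_pow_mem hreg' ha 2 2 hmem)

theorem stmt_18 {R : Type*} [CommRing R] [IsDomain R]
    (hbig : ∀ J : Ideal R, J.FG → IsBigIdeal J) :
    ¬ ∃ a b : R, a ∈ nonZeroDivisors R ∧
      (∀ x : R, b * x ∈ Ideal.span ({a} : Set R) → x ∈ Ideal.span ({a} : Set R)) ∧
      Ideal.span ({a, b} : Set R) ≠ ⊤ :=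
  stmt_18_general hbig
end
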